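/- For every real number x ≥ 0: π(x) = 0 if x < 2; π(x) = 1 if 2 ≤ x < 3; π(x) = 2 if x = 3; and π(x) = Υ_n(x) whenever n ≥ 2 and p_n < x < p_{n+1}^2 (where p_k denotes the k-th prime). -/

import Mathlib

/-!
Let `ω(j)` be the number of the first `n` primes dividing `j` (`countDvd`) and `g_k` the number
of `0 < j ≤ x` with `ω(j) = k` (`countDvdFiber`). Since the `p_i` are pairwise coprime,
`⌊x / (p_{k₁} ⋯ p_{k_m})⌋` counts the `j ≤ x` divisible by that product, so double counting gives
`σ_{n,m}(x) = ∑_k C(k, m) g_k`. The recursion defining `γ_{n,m}` inverts this triangular system,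
hence `γ_{n,k} = g_k`, and then `Υ_n(x) = g_0 + n - 1`. For `p_n < x < p_{n+1}²`, a `j ≤ x` free
of the first `n` primes is `1` or a prime in `(p_n, x]`, so `g_0 = 1 + π(x) - n`.
-/

open Finset

/-- `p k` is the `k`-th prime (1-indexed): `p 1 = 2`, `p 2 = 3`, `p 3 = 5`, ... -/
noncomputable def nthPrime (k : ℕ) : ℕ := Nat.nth Nat.Prime (k - 1)

/-- `σ_{n,m}(x) = Σ_{1 ≤ k₁ < ⋯ < k_m ≤ n} ⌊x / (p_{k₁} ⋯ p_{k_m})⌋`, realized as a sum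
over the `m`-element subsets of `{1, …, n}`. -/
noncomputable def sigma' (n m : ℕ) (x : ℝ) : ℤ :=
  ∑ s ∈ (Finset.Icc 1 n).powersetCard m, ⌊x / ∏ i ∈ s, (nthPrime i : ℝ)⌋

/-- `γ_{n,m}(x)` defined by downward recursion:
`γ_{n,m}(x) = σ_{n,m}(x) − Σ_{k=m+1}^{n} C(k,m) · γ_{n,k}(x)`
(in particular `γ_{n,n}(x) = σ_{n,n}(x)`). -/
noncomputable def gamma' (n m : ℕ) (x : ℝ) : ℤ :=
  sigma' n m x -
    ∑ k ∈ (Finset.Icc (m + 1) n).attach, (Nat.choose k.1 m : ℤ) * gamma' n k.1 x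
termination_by n - m
decreasing_by
  have hk := Finset.mem_Icc.mp k.2
  omega

/-- `Υ_n(x) = ⌊x⌋ − σ_{n,1}(x) + Σ_{k=2}^{n} (k−1)·γ_{n,k}(x) + n − 1`. -/
noncomputable def upsilon (n : ℕ) (x : ℝ) : ℤ :=
  ⌊x⌋ - sigma' n 1 x + ∑ k ∈ Finset.Icc 2 n, ((k : ℤ) - 1) * gamma' n k x + n - 1

/-- `π(x)`: the number of primes `p` with `p ≤ x`. -/
noncomputable def primePi (x : ℝ) : ℕ := ((Finset.range (⌊x⌋₊ + 1)).filter Nat.Prime).card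

open Function

section CountDvd

variable {ι : Type*} (s : Finset ι) (q : ι → ℕ)

def countDvd (j : ℕ) : ℕ := #{i ∈ s | q i ∣ j}

def countDvdFiber (N k : ℕ) : ℕ := #{j ∈ Ioc 0 N | countDvd s q j = k}

lemma countDvd_le (j : ℕ) : countDvd s q j ≤ #s := card_filter_le _ _

variable {s q}

lemma prod_dvd_of_pairwise_coprime (hq : (s : Set ι).Pairwise (Nat.Coprime on q)) {j : ℕ}
    (h : ∀ i ∈ s, q i ∣ j) : ∏ i ∈ s, q i ∣ j := by
  have := Finset.prod_dvd_of_coprime (s := fun i => (q i : ℤ)) (z := (j : ℤ))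
    (hq.mono' fun _ _ => Nat.isCoprime_iff_coprime.mpr)
    fun i hi => Int.natCast_dvd_natCast.mpr (h i hi)
  exact_mod_cast this

lemma filter_powersetCard_prod_dvd (hq : (s : Set ι).Pairwise (Nat.Coprime on q)) (m j : ℕ) :
    {t ∈ s.powersetCard m | ∏ i ∈ t, q i ∣ j} = {i ∈ s | q i ∣ j}.powersetCard m := by
  ext t
  simp only [mem_filter, mem_powersetCard, subset_iff]
  constructor
  · rintro ⟨⟨hts, hcard⟩, hdvd⟩
    exact ⟨fun i hi => ⟨hts hi, (dvd_prod_of_mem q hi).trans hdvd⟩, hcard⟩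
  · rintro ⟨hts, hcard⟩
    have hts' : t ⊆ s := fun i hi => (hts hi).1
    exact ⟨⟨hts', hcard⟩, prod_dvd_of_pairwise_coprime (hq.mono (by exact_mod_cast hts'))
      fun i hi => (hts hi).2⟩

theorem sum_powersetCard_div_prod (hq : (s : Set ι).Pairwise (Nat.Coprime on q)) (N m : ℕ) :
    ∑ t ∈ s.powersetCard m, N / ∏ i ∈ t, q i = ∑ j ∈ Ioc 0 N, (countDvd s q j).choose m := by
  calc ∑ t ∈ s.powersetCard m, N / ∏ i ∈ t, q i
      = ∑ t ∈ s.powersetCard m, #{j ∈ Ioc 0 N | ∏ i ∈ t, q i ∣ j} := by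
        simp only [Nat.Ioc_filter_dvd_card_eq_div]
    _ = ∑ j ∈ Ioc 0 N, #{t ∈ s.powersetCard m | ∏ i ∈ t, q i ∣ j} :=
        sum_card_bipartiteAbove_eq_sum_card_bipartiteBelow _
    _ = _ := by simp only [filter_powersetCard_prod_dvd hq, card_powersetCard, countDvd]

variable (s q) in
lemma sum_choose_countDvd (N m : ℕ) :
    ∑ j ∈ Ioc 0 N, (countDvd s q j).choose m
      = ∑ k ∈ range (#s + 1), k.choose m * countDvdFiber s q N k := by
  rw [← sum_fiberwise_of_maps_to (g := countDvd s q) (t := range (#s + 1))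
    fun j _ => mem_range.mpr (Nat.lt_succ_of_le (countDvd_le s q j))]
  refine sum_congr rfl fun k _ => ?_
  rw [sum_congr rfl fun j hj => congrArg (Nat.choose · m) (mem_filter.mp hj).2, sum_const,
    smul_eq_mul, mul_comm, countDvdFiber]

end CountDvd

theorem sum_range_choose_mul_eq {R : Type*} [CommSemiring R] (f : ℕ → R) {m n : ℕ} (hmn : m ≤ n) :
    ∑ k ∈ range (n + 1), (k.choose m : R) * f k
      = f m + ∑ k ∈ Icc (m + 1) n, (k.choose m : R) * f k := by
  have hlow : ∑ k ∈ Ico 0 m, (k.choose m : R) * f k = 0 :=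
    sum_eq_zero fun k hk => by simp [Nat.choose_eq_zero_of_lt (mem_Ico.mp hk).2]
  rw [range_eq_Ico, ← sum_Ico_consecutive _ (Nat.zero_le m) (by omega : m ≤ n + 1), hlow,
    zero_add, sum_eq_sum_Ico_succ_bot (by omega : m < n + 1), Nat.choose_self, Nat.cast_one,
    one_mul, Ico_add_one_right_eq_Icc]

lemma nthPrime_prime (k : ℕ) : (nthPrime k).Prime := Nat.prime_nth_prime _

lemma pairwise_coprime_nthPrime (n : ℕ) :
    ((Icc 1 n : Finset ℕ) : Set ℕ).Pairwise (Nat.Coprime on nthPrime) := by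
  intro i hi j hj hij
  rw [onFun, Nat.coprime_primes (nthPrime_prime i) (nthPrime_prime j), nthPrime,
    nthPrime, (Nat.nth_injective Nat.infinite_setOfPred_prime).ne_iff]
  simp only [coe_Icc, Set.mem_Icc] at hi hj
  omega

lemma floor_div_natCast_eq {x : ℝ} (hx : 0 ≤ x) (d : ℕ) : ⌊x / d⌋ = ((⌊x⌋₊ / d : ℕ) : ℤ) := by
  rw [Int.floor_div_natCast, ← Int.natCast_floor_eq_floor hx, Int.natCast_div]

lemma sigma'_eq_sum_choose_mul {x : ℝ} (hx : 0 ≤ x) (n m : ℕ) :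
    sigma' n m x
      = ∑ k ∈ range (n + 1), (k.choose m : ℤ) * countDvdFiber (Icc 1 n) nthPrime ⌊x⌋₊ k := by
  have h := (sum_powersetCard_div_prod (pairwise_coprime_nthPrime n) ⌊x⌋₊ m).trans
    (sum_choose_countDvd _ _ ⌊x⌋₊ m)
  rw [Nat.card_Icc, Nat.add_sub_cancel] at h
  simp only [sigma', ← Nat.cast_prod, floor_div_natCast_eq hx]
  exact_mod_cast h

lemma gamma'_eq_countDvdFiber {x : ℝ} (hx : 0 ≤ x) {n m : ℕ} (hm : m ≤ n) :
    gamma' n m x = countDvdFiber (Icc 1 n) nthPrime ⌊x⌋₊ m := by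
  rw [gamma', sum_attach (Icc (m + 1) n) fun k => (k.choose m : ℤ) * gamma' n k x,
    sigma'_eq_sum_choose_mul hx, sum_range_choose_mul_eq _ hm]
  have hrec : ∀ k ∈ Icc (m + 1) n, (k.choose m : ℤ) * gamma' n k x
      = (k.choose m : ℤ) * countDvdFiber (Icc 1 n) nthPrime ⌊x⌋₊ k := fun k hk => by
    rw [gamma'_eq_countDvdFiber hx (mem_Icc.mp hk).2]
  rw [sum_congr rfl hrec, add_sub_cancel_right]
termination_by n - m
decreasing_by
  have := mem_Icc.mp hk
  omega

lemma upsilon_eq {x : ℝ} (hx : 0 ≤ x) {n : ℕ} (hn : 1 ≤ n) :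
    upsilon n x = countDvdFiber (Icc 1 n) nthPrime ⌊x⌋₊ 0 + n - 1 := by
  set g : ℕ → ℤ := fun k => countDvdFiber (Icc 1 n) nthPrime ⌊x⌋₊ k
  have hfloor : ⌊x⌋ = sigma' n 0 x := by simp [sigma']
  have hgamma : ∑ k ∈ Icc 2 n, ((k : ℤ) - 1) * gamma' n k x = ∑ k ∈ Icc 2 n, ((k : ℤ) - 1) * g k :=
    sum_congr rfl fun k hk => by rw [gamma'_eq_countDvdFiber hx (mem_Icc.mp hk).2]
  have hsplit (f : ℕ → ℤ) : ∑ k ∈ Icc (0 + 1) n, f k = f 1 + ∑ k ∈ Icc (1 + 1) n, f k := by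
    rw [← sum_insert (s := Icc (1 + 1) n) (by simp)]
    congr 1
    ext k
    simp only [mem_Icc, mem_insert]
    omega
  rw [upsilon, hfloor, sigma'_eq_sum_choose_mul hx n 0, sigma'_eq_sum_choose_mul hx n 1,
    sum_range_choose_mul_eq _ (Nat.zero_le n), sum_range_choose_mul_eq _ hn, hgamma, hsplit]
  simp only [Nat.choose_zero_right, Nat.choose_one_right, Nat.cast_one, one_mul, sub_mul,
    sum_sub_distrib]
  ring

lemma nthPrime_le_nthPrime {i j : ℕ} (h : i ≤ j) : nthPrime i ≤ nthPrime j :=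
  (Nat.nth_strictMono Nat.infinite_setOfPred_prime).monotone (by omega)

lemma nthPrime_succ_le_of_lt {n p : ℕ} (hp : p.Prime) (h : nthPrime n < p) :
    nthPrime (n + 1) ≤ p := by
  rw [nthPrime, ← Nat.nth_count hp] at h ⊢
  rw [Nat.add_sub_cancel, (Nat.nth_strictMono Nat.infinite_setOfPred_prime).le_iff_le]
  rw [(Nat.nth_strictMono Nat.infinite_setOfPred_prime).lt_iff_lt] at h
  omega

lemma exists_nthPrime_dvd_iff {n j : ℕ} (hn : 1 ≤ n) :
    (∃ i ∈ Icc 1 n, nthPrime i ∣ j) ↔ ∃ p, p.Prime ∧ p ∣ j ∧ p ≤ nthPrime n := by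
  constructor
  · rintro ⟨i, hi, hdvd⟩
    exact ⟨nthPrime i, nthPrime_prime i, hdvd, nthPrime_le_nthPrime (mem_Icc.mp hi).2⟩
  · rintro ⟨p, hp, hdvd, hle⟩
    have hcount : Nat.count Nat.Prime p < n := by
      rw [nthPrime, ← Nat.nth_count hp,
        (Nat.nth_strictMono Nat.infinite_setOfPred_prime).le_iff_le] at hle
      omega
    refine ⟨Nat.count Nat.Prime p + 1, mem_Icc.mpr ⟨by omega, hcount⟩, ?_⟩
    rwa [nthPrime, Nat.add_sub_cancel, Nat.nth_count hp]

lemma countDvd_nthPrime_eq_zero_iff {n j : ℕ} (hn : 1 ≤ n) :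
    countDvd (Icc 1 n) nthPrime j = 0 ↔ ∀ p, p.Prime → p ∣ j → nthPrime n < p := by
  rw [countDvd, card_eq_zero, filter_eq_empty_iff, ← not_iff_not]
  push Not
  exact exists_nthPrime_dvd_iff hn

lemma eq_one_or_prime_of_lt_sq {j b : ℕ} (hj0 : 0 < j) (hjb : j < b ^ 2)
    (h : ∀ p, p.Prime → p ∣ j → b ≤ p) : j = 1 ∨ j.Prime := by
  by_contra! hj
  have hmin := h _ (Nat.minFac_prime hj.1) (Nat.minFac_dvd j)
  have := (Nat.pow_le_pow_left hmin 2).trans (Nat.minFac_sq_le_self hj0 hj.2)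
  omega

lemma countDvdFiber_nthPrime_zero {n N : ℕ} (hn : 1 ≤ n) (hN0 : 0 < N)
    (hN : N < nthPrime (n + 1) ^ 2) :
    countDvdFiber (Icc 1 n) nthPrime N 0 = 1 + #{p ∈ Ioc (nthPrime n) N | p.Prime} := by
  have hfiber : {j ∈ Ioc 0 N | countDvd (Icc 1 n) nthPrime j = 0}
      = insert 1 {p ∈ Ioc (nthPrime n) N | p.Prime} := by
    ext j
    simp only [mem_filter, mem_Ioc, mem_insert, countDvd_nthPrime_eq_zero_iff hn]
    constructor
    · rintro ⟨⟨hj0, hjN⟩, h⟩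
      refine (eq_one_or_prime_of_lt_sq hj0 (hjN.trans_lt hN)
        fun p hp hdvd => nthPrime_succ_le_of_lt hp (h p hp hdvd)).imp_right fun hj => ?_
      exact ⟨⟨h j hj dvd_rfl, hjN⟩, hj⟩
    · rintro (rfl | ⟨⟨hgt, hjN⟩, hj⟩)
      · exact ⟨⟨one_pos, hN0⟩, fun p hp hdvd => (hp.not_dvd_one hdvd).elim⟩
      · exact ⟨⟨by omega, hjN⟩, fun p hp hdvd => (Nat.prime_dvd_prime_iff_eq hp hj).mp hdvd ▸ hgt⟩
  rw [countDvdFiber, hfiber, card_insert_of_notMem fun h => Nat.not_prime_one (mem_filter.mp h).2,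
    add_comm]

lemma card_primesLE_nthPrime {n : ℕ} (hn : 1 ≤ n) : #(Nat.primesLE (nthPrime n)) = n := by
  rw [Nat.primesLE_card_eq_primeCounting, Nat.primeCounting, Nat.primeCounting', nthPrime,
    Nat.count_nth_succ_of_infinite Nat.infinite_setOfPred_prime]
  omega

lemma card_primesLE_eq_add {n N : ℕ} (hn : 1 ≤ n) (hN : nthPrime n ≤ N) :
    #(Nat.primesLE N) = n + #{p ∈ Ioc (nthPrime n) N | p.Prime} := by
  have hlow : {p ∈ Nat.primesLE N | p ≤ nthPrime n} = Nat.primesLE (nthPrime n) := by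
    ext p
    simp only [mem_filter, Nat.mem_primesLE]
    constructor
    · exact fun h => ⟨h.2, h.1.2⟩
    · exact fun h => ⟨⟨h.1.trans hN, h.2⟩, h.1⟩
  have hhigh : {p ∈ Nat.primesLE N | ¬p ≤ nthPrime n} = {p ∈ Ioc (nthPrime n) N | p.Prime} := by
    ext p
    simp only [mem_filter, Nat.mem_primesLE, mem_Ioc, not_le]
    tauto
  rw [← card_filter_add_card_filter_not (· ≤ nthPrime n), hlow, hhigh,
    card_primesLE_nthPrime hn]

lemma primePi_eq_card_primesLE (x : ℝ) : primePi x = #(Nat.primesLE ⌊x⌋₊) := rfl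

theorem primePi_eq
    (x : ℝ) (hx : 0 ≤ x) :
    (x < 2 → primePi x = 0) ∧
    (2 ≤ x → x < 3 → primePi x = 1) ∧
    (x = 3 → primePi x = 2) ∧
    (∀ n : ℕ, 2 ≤ n → (nthPrime n : ℝ) < x → x < (nthPrime (n + 1) : ℝ) ^ 2 →
      (primePi x : ℤ) = upsilon n x) := by
  have hπ : primePi x = Nat.primeCounting ⌊x⌋₊ := Nat.primesLE_card_eq_primeCounting _
  refine ⟨fun h2 => ?_, fun h2 h3 => ?_, fun h3 => ?_, fun n hn hlow hhigh => ?_⟩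
  · have : ⌊x⌋₊ < 2 := (Nat.floor_lt hx).mpr (by exact_mod_cast h2)
    rw [hπ, Nat.primeCounting_eq_zero_iff]
    omega
  · rw [hπ, (Nat.floor_eq_iff hx).mpr ⟨by exact_mod_cast h2, by exact_mod_cast h3⟩]
    decide
  · rw [hπ, h3, Nat.floor_ofNat]
    decide
  · have hN : nthPrime n ≤ ⌊x⌋₊ := Nat.le_floor hlow.le
    have hN' : ⌊x⌋₊ < nthPrime (n + 1) ^ 2 := (Nat.floor_lt hx).mpr (by exact_mod_cast hhigh)
    rw [upsilon_eq hx (by omega), countDvdFiber_nthPrime_zero (by omega)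
      ((nthPrime_prime n).pos.trans_le hN) hN', primePi_eq_card_primesLE,
      card_primesLE_eq_add (by omega) hN]
    push_cast
    ring
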